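/- Let Φ*_r(u,t;v,ρ) := Φ(u,r,t;v,ρ) be the defining function with r frozen instead of t. Then for all (u,r,t,v,ρ) with Φ(u,r,t;v,ρ)=0, the rotational curvature of Φ*_r satisfies Rot(Φ*_r)(u,t;v,ρ) = det M(Φ*_r) = 4b⁴·r²·t·ρ·(r² − t² − ρ²), where M(Φ*_r) is the 3×3 Monge–Ampère matrix with rows (Φ*_r, ∂_vΦ*_r, ∂_ρΦ*_r), (∂_uΦ*_r, ∂²_{uv}Φ*_r, ∂²_{uρ}Φ*_r), (∂_tΦ*_r, ∂²_{tv}Φ*_r, ∂²_{tρ}Φ*_r). -/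

import Mathlib

/-- The defining function Φ(u,r,t;v,ρ) = (u−v)² − (b/2)²(4r²ρ² − (r²+ρ²−t²)²). -/
noncomputable def Phi (b u r t v ρ : ℝ) : ℝ :=
  (u - v) ^ 2 - (b / 2) ^ 2 * (4 * r ^ 2 * ρ ^ 2 - (r ^ 2 + ρ ^ 2 - t ^ 2) ^ 2)

/-- ∂_u Φ -/
noncomputable def Pu (b u r t v ρ : ℝ) : ℝ := deriv (fun u' => Phi b u' r t v ρ) u
/-- ∂_r Φ -/
noncomputable def Pr (b u r t v ρ : ℝ) : ℝ := deriv (fun r' => Phi b u r' t v ρ) r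
/-- ∂_t Φ -/
noncomputable def Pt (b u r t v ρ : ℝ) : ℝ := deriv (fun t' => Phi b u r t' v ρ) t
/-- ∂_v Φ -/
noncomputable def Pv (b u r t v ρ : ℝ) : ℝ := deriv (fun v' => Phi b u r t v' ρ) v
/-- ∂_ρ Φ -/
noncomputable def Pp (b u r t v ρ : ℝ) : ℝ := deriv (fun ρ' => Phi b u r t v ρ') ρ
/-- ∂²_{uv} Φ -/
noncomputable def Puv (b u r t v ρ : ℝ) : ℝ := deriv (fun u' => Pv b u' r t v ρ) u
/-- ∂²_{uρ} Φ -/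
noncomputable def Pup (b u r t v ρ : ℝ) : ℝ := deriv (fun u' => Pp b u' r t v ρ) u
/-- ∂²_{rv} Φ -/
noncomputable def Prv (b u r t v ρ : ℝ) : ℝ := deriv (fun r' => Pv b u r' t v ρ) r
/-- ∂²_{rρ} Φ -/
noncomputable def Prp (b u r t v ρ : ℝ) : ℝ := deriv (fun r' => Pp b u r' t v ρ) r
/-- ∂²_{tv} Φ -/
noncomputable def Ptv (b u r t v ρ : ℝ) : ℝ := deriv (fun t' => Pv b u r t' v ρ) t
/-- ∂²_{tρ} Φ -/
noncomputable def Ptp (b u r t v ρ : ℝ) : ℝ := deriv (fun t' => Pp b u r t' v ρ) t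
/-- ∂²_{vv} Φ -/
noncomputable def Pvv (b u r t v ρ : ℝ) : ℝ := deriv (fun v' => Pv b u r t v' ρ) v
/-- ∂²_{vρ} Φ -/
noncomputable def Pvp (b u r t v ρ : ℝ) : ℝ := deriv (fun v' => Pp b u r t v' ρ) v
/-- ∂²_{ρv} Φ -/
noncomputable def Ppv (b u r t v ρ : ℝ) : ℝ := deriv (fun ρ' => Pv b u r t v ρ') ρ
/-- ∂²_{ρρ} Φ -/
noncomputable def Ppp (b u r t v ρ : ℝ) : ℝ := deriv (fun ρ' => Pp b u r t v ρ') ρ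

/-!
Φ is a polynomial, so its partial derivatives are explicit: `∂_uΦ = −∂_vΦ = 2(u−v)`,
`∂²_{uv}Φ = −2`, `∂²_{uρ}Φ = ∂²_{tv}Φ = 0`. On the zero set the top-left entry vanishes, so the
determinant is `−8b²tρ(u−v)² + 2 ∂_ρΦ ∂_tΦ`, and substituting `(u−v)² = (b/2)²(4r²ρ² − (r²+ρ²−t²)²)`
(which is `Φ = 0`) leaves a polynomial identity in `b, r, t, ρ`.
-/

section PartialDerivatives

variable (b u r t v ρ : ℝ)

lemma Pu_eq : Pu b u r t v ρ = 2 * (u - v) := by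
  have h := (((hasDerivAt_id u).sub_const v).pow 2).sub_const
    ((b / 2) ^ 2 * (4 * r ^ 2 * ρ ^ 2 - (r ^ 2 + ρ ^ 2 - t ^ 2) ^ 2))
  exact (h.congr_deriv (by simp)).deriv

lemma Pv_eq : Pv b u r t v ρ = -2 * (u - v) := by
  have h := (((hasDerivAt_id v).const_sub u).pow 2).sub_const
    ((b / 2) ^ 2 * (4 * r ^ 2 * ρ ^ 2 - (r ^ 2 + ρ ^ 2 - t ^ 2) ^ 2))
  exact (h.congr_deriv (by simp)).deriv

lemma Pt_eq : Pt b u r t v ρ = b ^ 2 * t * (t ^ 2 - r ^ 2 - ρ ^ 2) := by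
  have h := (((((hasDerivAt_pow 2 t).const_sub (r ^ 2 + ρ ^ 2)).pow 2).const_sub
    (4 * r ^ 2 * ρ ^ 2)).const_mul ((b / 2) ^ 2)).const_sub ((u - v) ^ 2)
  exact (h.congr_deriv (by push_cast; ring)).deriv

lemma Pp_eq : Pp b u r t v ρ = -(b ^ 2) * ρ * (r ^ 2 + t ^ 2 - ρ ^ 2) := by
  have h := ((((hasDerivAt_pow 2 ρ).const_mul (4 * r ^ 2)).sub
    ((((hasDerivAt_pow 2 ρ).const_add (r ^ 2)).sub_const (t ^ 2)).pow 2)).const_mul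
    ((b / 2) ^ 2)).const_sub ((u - v) ^ 2)
  exact (h.congr_deriv (by push_cast; ring)).deriv

lemma Puv_eq : Puv b u r t v ρ = -2 := by
  simp [Puv, Pv_eq]

lemma Pup_eq : Pup b u r t v ρ = 0 := by
  simp [Pup, Pp_eq]

lemma Ptv_eq : Ptv b u r t v ρ = 0 := by
  simp [Ptv, Pv_eq]

lemma Ptp_eq : Ptp b u r t v ρ = -2 * b ^ 2 * t * ρ := by
  simp [Ptp, Pp_eq]
  ring

end PartialDerivatives

/-- On the zero set of Φ, the rotational curvature of Φ*_r (with r frozen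
instead of t) equals 4b⁴r²tρ(r²−t²−ρ²). -/
theorem statement7 (b u r t v ρ : ℝ) (hΦ : Phi b u r t v ρ = 0) :
    Matrix.det !![Phi b u r t v ρ, Pv b u r t v ρ, Pp b u r t v ρ;
                  Pu b u r t v ρ, Puv b u r t v ρ, Pup b u r t v ρ;
                  Pt b u r t v ρ, Ptv b u r t v ρ, Ptp b u r t v ρ]
      = 4 * b ^ 4 * r ^ 2 * t * ρ * (r ^ 2 - t ^ 2 - ρ ^ 2) := by
  simp only [Matrix.det_fin_three, Matrix.of_apply, Matrix.cons_val', Matrix.cons_val_zero,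
    Matrix.cons_val_one, Matrix.cons_val_two, Matrix.empty_val', Matrix.cons_val_fin_one,
    Matrix.head_cons, Matrix.head_fin_const, Matrix.tail_cons, hΦ, Pu_eq, Pv_eq, Pp_eq, Pt_eq,
    Puv_eq, Pup_eq, Ptv_eq, Ptp_eq]
  unfold Phi at hΦ
  linear_combination (-8 * b ^ 2 * t * ρ) * hΦ
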